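/- arXiv:2112.11674 — 4 statements merged into one kernel-verified Lean document; each statement's English description precedes it below -/
import Mathlib

section
/- Let D(x) = x^r (A + φ(x)) on (0, x₀] with r > 0, A > 0, φ continuously differentiable on (0, x₀], φ(x) → 0 and x·φ'(x) → 0 as x → 0⁺. Then D is strictly increasing on some interval (0, δ), and hence D is injective there with a well-defined inverse, and the inverse satisfies D⁻¹(y) = y^{1/r}(B + ψ(y)) for some B > 0 and a function ψ(y) → 0 as y → 0⁺. -/
open Filter Topology Set

theorem stmt_2 (x₀ r A : ℝ) (D φ φ' : ℝ → ℝ)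
    (hx₀ : 0 < x₀) (hr : 0 < r) (hA : 0 < A)
    (hD : ∀ x ∈ Set.Ioc 0 x₀, D x = x ^ r * (A + φ x))
    (hφd : ∀ x ∈ Set.Ioc 0 x₀, HasDerivAt φ (φ' x) x)
    (hφ0 : Tendsto φ (𝓝[>] 0) (𝓝 0))
    (hxφ' : Tendsto (fun x => x * φ' x) (𝓝[>] 0) (𝓝 0)) :
    ∃ δ > 0, δ ≤ x₀ ∧ StrictMonoOn D (Set.Ioo 0 δ) ∧ Set.InjOn D (Set.Ioo 0 δ) ∧
      ∃ B > 0, ∃ ψ : ℝ → ℝ, Tendsto ψ (𝓝[>] 0) (𝓝 0) ∧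
        ∀ x ∈ Set.Ioo 0 δ, x = (D x) ^ (1 / r) * (B + ψ (D x)) := by
  classical
  obtain ⟨ε₁, hε₁, h1⟩ := Metric.tendsto_nhdsWithin_nhds.mp hφ0 (A/2) (by positivity)
  obtain ⟨ε₂, hε₂, h2⟩ := Metric.tendsto_nhdsWithin_nhds.mp hxφ' (r*A/4) (by positivity)
  set δ : ℝ := min (min ε₁ ε₂) x₀ with hδdef
  have hδpos : 0 < δ := lt_min (lt_min hε₁ hε₂) hx₀
  have hδx₀ : δ ≤ x₀ := min_le_right _ _
  have hφb : ∀ x ∈ Ioo (0:ℝ) δ, |φ x| < A/2 := by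
    intro x hx
    have := h1 (mem_Ioi.mpr hx.1)
      (by rw [Real.dist_eq, sub_zero, abs_of_pos hx.1]
          exact hx.2.trans_le ((min_le_left _ _).trans (min_le_left _ _)))
    simpa [Real.dist_eq] using this
  have hφ'b : ∀ x ∈ Ioo (0:ℝ) δ, |x * φ' x| < r*A/4 := by
    intro x hx
    have := h2 (mem_Ioi.mpr hx.1)
      (by rw [Real.dist_eq, sub_zero, abs_of_pos hx.1]
          exact hx.2.trans_le ((min_le_left _ _).trans (min_le_right _ _)))
    rw [Real.dist_eq, sub_zero] at this
    exact this
  have hAφ : ∀ x ∈ Ioo (0:ℝ) δ, A/2 < A + φ x := by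
    intro x hx
    have := (abs_lt.mp (hφb x hx)).1
    linarith
  have hAφ0 : ∀ x ∈ Ioo (0:ℝ) δ, 0 < A + φ x := fun x hx =>
    lt_trans (by positivity) (hAφ x hx)
  -- derivative of D on Ioo 0 δ
  have hDd : ∀ x ∈ Ioo (0:ℝ) δ,
      HasDerivAt D (x ^ (r-1) * (r * (A + φ x) + x * φ' x)) x := by
    intro x hx
    have hx0 : 0 < x := hx.1
    have hxlt : x < x₀ := hx.2.trans_le hδx₀
    have hder : HasDerivAt (fun y => y ^ r * (A + φ y))
        (r * x ^ (r-1) * (A + φ x) + x ^ r * φ' x) x :=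
      (Real.hasDerivAt_rpow_const (Or.inl hx0.ne')).mul
        ((hφd x ⟨hx0, hxlt.le⟩).const_add A)
    have heq : D =ᶠ[𝓝 x] fun y => y ^ r * (A + φ y) := by
      filter_upwards [Ioo_mem_nhds hx0 hxlt] with y hy
      exact hD y ⟨hy.1, hy.2.le⟩
    have h := hder.congr_of_eventuallyEq heq
    have hval : r * x ^ (r-1) * (A + φ x) + x ^ r * φ' x
        = x ^ (r-1) * (r * (A + φ x) + x * φ' x) := by
      have hxr : x ^ r = x ^ (r-1) * x := by
        rw [Real.rpow_sub_one hx0.ne']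
        field_simp
      rw [hxr]; ring
    rwa [hval] at h
  have hDpos : ∀ x ∈ Ioo (0:ℝ) δ,
      0 < x ^ (r-1) * (r * (A + φ x) + x * φ' x) := by
    intro x hx
    have h1 := hAφ x hx
    have h2 := (abs_lt.mp (hφ'b x hx)).1
    have : 0 < r * (A + φ x) + x * φ' x := by nlinarith
    exact mul_pos (Real.rpow_pos_of_pos hx.1 _) this
  have hmono : StrictMonoOn D (Ioo 0 δ) := by
    apply strictMonoOn_of_deriv_pos (convex_Ioo 0 δ)
    · exact fun x hx => ((hDd x hx).continuousAt).continuousWithinAt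
    · intro x hx
      rw [interior_Ioo] at hx
      rw [(hDd x hx).deriv]
      exact hDpos x hx
  have hinj : Set.InjOn D (Ioo 0 δ) := hmono.injOn
  -- the key pointwise identity
  have key : ∀ x ∈ Ioo (0:ℝ) δ, x = (D x) ^ (1/r) * (A + φ x) ^ (-(1/r)) := by
    intro x hx
    have hx0 : 0 < x := hx.1
    have hAφx := hAφ0 x hx
    rw [hD x ⟨hx0, (hx.2.trans_le hδx₀).le⟩, Real.mul_rpow (by positivity) hAφx.le,
      ← Real.rpow_mul hx0.le, mul_one_div_cancel hr.ne', Real.rpow_one, mul_assoc,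
      ← Real.rpow_add hAφx, add_neg_cancel, Real.rpow_zero, mul_one]
  set B : ℝ := A ^ (-(1/r)) with hBdef
  have hBpos : 0 < B := Real.rpow_pos_of_pos hA _
  set ψ : ℝ → ℝ := fun y =>
    if h : ∃ x, x ∈ Ioo (0:ℝ) δ ∧ D x = y then
      (A + φ h.choose) ^ (-(1/r)) - B else 0 with hψdef
  have hψval : ∀ x ∈ Ioo (0:ℝ) δ, ψ (D x) = (A + φ x) ^ (-(1/r)) - B := by
    intro x hx
    have h : ∃ x', x' ∈ Ioo (0:ℝ) δ ∧ D x' = D x := ⟨x, hx, rfl⟩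
    have hch := h.choose_spec
    have : h.choose = x := hinj hch.1 hx hch.2
    simp only [hψdef, dif_pos h, this]
  -- the auxiliary function tends to 0
  have hcont : ContinuousAt (fun t : ℝ => (A + t) ^ (-(1/r))) 0 := by
    have h1 : ContinuousAt (fun s : ℝ => s ^ (-(1/r))) (A + 0) := by
      rw [add_zero]
      exact Real.continuousAt_rpow_const A _ (Or.inl hA.ne')
    exact h1.comp ((continuous_const.add continuous_id).continuousAt)
  have hf0 : Tendsto (fun x => (A + φ x) ^ (-(1/r)) - B) (𝓝[>] 0) (𝓝 0) := by
    have := (hcont.tendsto.comp hφ0).sub_const B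
    simpa [hBdef] using this
  have hψ0 : Tendsto ψ (𝓝[>] 0) (𝓝 0) := by
    rw [Metric.tendsto_nhdsWithin_nhds]
    intro ε hε
    obtain ⟨δ₁, hδ₁, hb⟩ := Metric.tendsto_nhdsWithin_nhds.mp hf0 ε hε
    set x₁ : ℝ := min (δ₁/2) (δ/2) with hx₁def
    have hx₁pos : 0 < x₁ := lt_min (by positivity) (by positivity)
    have hx₁mem : x₁ ∈ Ioo (0:ℝ) δ :=
      ⟨hx₁pos, (min_le_right _ _).trans_lt (by linarith)⟩
    have hη : 0 < D x₁ := by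
      rw [hD x₁ ⟨hx₁pos, (hx₁mem.2.trans_le hδx₀).le⟩]
      exact mul_pos (Real.rpow_pos_of_pos hx₁pos _) (hAφ0 x₁ hx₁mem)
    refine ⟨D x₁, hη, ?_⟩
    intro y hy hyd
    rw [Real.dist_eq, sub_zero, abs_of_pos (mem_Ioi.mp hy)] at hyd
    by_cases h : ∃ x, x ∈ Ioo (0:ℝ) δ ∧ D x = y
    · have hch := h.choose_spec
      have hxx₁ : h.choose < x₁ := by
        by_contra hc
        push_neg at hc
        have := hmono.monotoneOn hx₁mem hch.1 hc
        rw [hch.2] at this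
        linarith
      have hxd : h.choose < δ₁ :=
        hxx₁.trans_le ((min_le_left _ _).trans (by linarith))
      have hlt := hb (mem_Ioi.mpr hch.1.1)
        (by rw [Real.dist_eq, sub_zero, abs_of_pos hch.1.1]; exact hxd)
      have hψy : ψ y = (A + φ h.choose) ^ (-(1/r)) - B := dif_pos h
      rw [Real.dist_eq, sub_zero] at hlt ⊢
      rw [hψy]
      exact hlt
    · have hψy : ψ y = 0 := dif_neg h
      rw [Real.dist_eq, hψy, sub_zero, abs_zero]
      exact hε
  refine ⟨δ, hδpos, hδx₀, hmono, hinj, B, hBpos, ψ, hψ0, ?_⟩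
  intro x hx
  rw [hψval x hx]
  have := key x hx
  linarith [this]
end

section
/- Let D₁(x) = x^{r₁}(A₁ + φ₁(x)) and D₂(x) = x^{r₂}(A₂ + φ₂(x)) be two maps of Mourtada form (r₁, r₂ > 0, A₁, A₂ > 0, φᵢ(x) → 0 as x → 0⁺, Dᵢ continuous on [0, x₀] with Dᵢ(0) = 0), and let ρ(x) = a x + O(x²) be a C¹ diffeomorphism fixing 0 with a > 0. Then the composition D₂ ∘ ρ ∘ D₁ is again of the form x^{r₁ r₂}(A + φ(x)) with A = A₂ (a A₁)^{r₂} > 0 and φ(x) → 0 as x → 0⁺. -/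
open Filter Topology Set

theorem stmt_4 (x₀ r₁ r₂ A₁ A₂ a : ℝ) (D₁ D₂ ρ φ₁ φ₂ : ℝ → ℝ)
    (hx₀ : 0 < x₀) (hr₁ : 0 < r₁) (hr₂ : 0 < r₂) (hA₁ : 0 < A₁) (hA₂ : 0 < A₂) (ha : 0 < a)
    (hD₁ : ∀ x ∈ Set.Ioc 0 x₀, D₁ x = x ^ r₁ * (A₁ + φ₁ x))
    (hD₂ : ∀ x ∈ Set.Ioc 0 x₀, D₂ x = x ^ r₂ * (A₂ + φ₂ x))
    (hφ₁ : Tendsto φ₁ (𝓝[>] 0) (𝓝 0)) (hφ₂ : Tendsto φ₂ (𝓝[>] 0) (𝓝 0))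
    (hD₁0 : D₁ 0 = 0) (hD₂0 : D₂ 0 = 0)
    (hD₁c : ContinuousOn D₁ (Set.Icc 0 x₀)) (hD₂c : ContinuousOn D₂ (Set.Icc 0 x₀))
    (hρdiff : ContDiffOn ℝ 1 ρ (Set.Icc 0 x₀)) (hρ0 : ρ 0 = 0)
    (hρ : ∃ Cρ > 0, ∀ᶠ x in 𝓝[>] 0, |ρ x - a * x| ≤ Cρ * x ^ 2) :
    ∃ φ : ℝ → ℝ, Tendsto φ (𝓝[>] 0) (𝓝 0) ∧
      ∀ᶠ x in 𝓝[>] 0, D₂ (ρ (D₁ x)) = x ^ (r₁ * r₂) * (A₂ * (a * A₁) ^ r₂ + φ x) := by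
  obtain ⟨Cρ, hCρ, hρest⟩ := hρ
  have hmem : ∀ᶠ x in 𝓝[>] (0:ℝ), x ∈ Set.Ioc 0 x₀ :=
    Ioc_mem_nhdsGT_of_mem ⟨le_refl 0, hx₀⟩
  have hpos : ∀ᶠ x in 𝓝[>] (0:ℝ), 0 < x := eventually_mem_nhdsWithin
  -- x ^ r₁ → 0
  have hpow : Tendsto (fun x : ℝ => x ^ r₁) (𝓝[>] 0) (𝓝 0) := by
    have h := (Real.continuousAt_rpow_const 0 r₁ (Or.inr hr₁.le)).tendsto
    rw [Real.zero_rpow hr₁.ne'] at h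
    exact h.mono_left nhdsWithin_le_nhds
  have hD₁eq : ∀ᶠ x in 𝓝[>] (0:ℝ), D₁ x = x ^ r₁ * (A₁ + φ₁ x) :=
    hmem.mono fun x hx => hD₁ x hx
  -- D₁ → 0
  have hD₁tend : Tendsto D₁ (𝓝[>] 0) (𝓝 0) := by
    have h : Tendsto (fun x : ℝ => x ^ r₁ * (A₁ + φ₁ x)) (𝓝[>] 0) (𝓝 (0 * (A₁ + 0))) :=
      hpow.mul (tendsto_const_nhds.add hφ₁)
    rw [zero_mul] at h
    exact h.congr' (hD₁eq.mono fun x hx => hx.symm)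
  have hφ₁small : ∀ᶠ x in 𝓝[>] (0:ℝ), 0 < A₁ + φ₁ x := by
    have h := (Metric.tendsto_nhds.mp hφ₁) A₁ hA₁
    filter_upwards [h] with x hx
    rw [Real.dist_eq, sub_zero] at hx
    linarith [neg_lt_of_abs_lt hx]
  have hD₁pos : ∀ᶠ x in 𝓝[>] (0:ℝ), 0 < D₁ x := by
    filter_upwards [hD₁eq, hφ₁small, hpos] with x he hs hp
    rw [he]; exact mul_pos (Real.rpow_pos_of_pos hp r₁) hs
  have hD₁T : Tendsto D₁ (𝓝[>] 0) (𝓝[>] 0) :=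
    tendsto_nhdsWithin_of_tendsto_nhds_of_eventually_within D₁ hD₁tend hD₁pos
  have hD₁Ioc : ∀ᶠ x in 𝓝[>] (0:ℝ), D₁ x ∈ Set.Ioc 0 x₀ := by
    filter_upwards [hD₁pos, hD₁tend.eventually_lt_const hx₀] with x h1 h2
    exact ⟨h1, h2.le⟩
  -- ρ y / y → a
  have hρratio : Tendsto (fun y : ℝ => ρ y / y) (𝓝[>] 0) (𝓝 a) := by
    have hsub : Tendsto (fun y : ℝ => ρ y / y - a) (𝓝[>] 0) (𝓝 0) := by
      have hbound : ∀ᶠ y in 𝓝[>] (0:ℝ), ‖ρ y / y - a‖ ≤ Cρ * y := by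
        filter_upwards [hρest, hpos] with y hy hyp
        have heq : ρ y / y - a = (ρ y - a * y) / y := by field_simp
        rw [Real.norm_eq_abs, heq, abs_div, abs_of_pos hyp, div_le_iff₀ hyp]
        calc |ρ y - a * y| ≤ Cρ * y ^ 2 := hy
          _ = Cρ * y * y := by ring
      have hb : Tendsto (fun y : ℝ => Cρ * y) (𝓝[>] 0) (𝓝 0) := by
        have h2 : Tendsto (fun y : ℝ => Cρ * y) (𝓝 0) (𝓝 (Cρ * 0)) :=
          (continuous_const.mul continuous_id).tendsto 0
        rw [mul_zero] at h2
        exact h2.mono_left nhdsWithin_le_nhds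
      exact squeeze_zero_norm' hbound hb
    have := hsub.add_const a
    simpa using this
  have hRratio : Tendsto (fun x => ρ (D₁ x) / D₁ x) (𝓝[>] 0) (𝓝 a) := hρratio.comp hD₁T
  have hRpos : ∀ᶠ x in 𝓝[>] (0:ℝ), 0 < ρ (D₁ x) := by
    filter_upwards [hRratio.eventually_const_lt ha, hD₁pos] with x h1 h2
    have := mul_pos h1 h2
    rwa [div_mul_cancel₀ _ h2.ne'] at this
  have hRtend : Tendsto (fun x => ρ (D₁ x)) (𝓝[>] 0) (𝓝 0) := by
    have h : Tendsto (fun x => ρ (D₁ x) / D₁ x * D₁ x) (𝓝[>] 0) (𝓝 (a * 0)) :=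
      hRratio.mul hD₁tend
    rw [mul_zero] at h
    refine h.congr' ?_
    filter_upwards [hD₁pos] with x hx
    rw [div_mul_cancel₀ _ hx.ne']
  have hRT : Tendsto (fun x => ρ (D₁ x)) (𝓝[>] 0) (𝓝[>] 0) :=
    tendsto_nhdsWithin_of_tendsto_nhds_of_eventually_within _ hRtend hRpos
  have hRIoc : ∀ᶠ x in 𝓝[>] (0:ℝ), ρ (D₁ x) ∈ Set.Ioc 0 x₀ := by
    filter_upwards [hRpos, hRtend.eventually_lt_const hx₀] with x h1 h2
    exact ⟨h1, h2.le⟩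
  -- ratio ρ(D₁ x) / x ^ r₁ → a * A₁
  have hratio1 : Tendsto (fun x => ρ (D₁ x) / x ^ r₁) (𝓝[>] 0) (𝓝 (a * A₁)) := by
    have h : Tendsto (fun x => ρ (D₁ x) / D₁ x * (A₁ + φ₁ x)) (𝓝[>] 0) (𝓝 (a * (A₁ + 0))) :=
      hRratio.mul (tendsto_const_nhds.add hφ₁)
    rw [add_zero] at h
    refine h.congr' ?_
    filter_upwards [hD₁eq, hφ₁small, hpos] with x he hs hp
    have hxr : (0:ℝ) < x ^ r₁ := Real.rpow_pos_of_pos hp r₁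
    rw [he]
    field_simp
  have hratio2 : Tendsto (fun x => (ρ (D₁ x) / x ^ r₁) ^ r₂) (𝓝[>] 0) (𝓝 ((a * A₁) ^ r₂)) :=
    ((Real.continuousAt_rpow_const (a * A₁) r₂
      (Or.inl (mul_pos ha hA₁).ne')).tendsto).comp hratio1
  have hφ₂comp : Tendsto (fun x => φ₂ (ρ (D₁ x))) (𝓝[>] 0) (𝓝 0) := hφ₂.comp hRT
  set g : ℝ → ℝ := fun x => (ρ (D₁ x) / x ^ r₁) ^ r₂ * (A₂ + φ₂ (ρ (D₁ x))) with hg_def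
  have hg : Tendsto g (𝓝[>] 0) (𝓝 (A₂ * (a * A₁) ^ r₂)) := by
    have h : Tendsto g (𝓝[>] 0) (𝓝 ((a * A₁) ^ r₂ * (A₂ + 0))) :=
      hratio2.mul (tendsto_const_nhds.add hφ₂comp)
    rwa [add_zero, mul_comm] at h
  refine ⟨fun x => g x - A₂ * (a * A₁) ^ r₂, by simpa using hg.sub_const (A₂ * (a * A₁) ^ r₂), ?_⟩
  filter_upwards [hRIoc, hmem, hpos, hD₁Ioc] with x hR hx hp hD
  have hxr : (0:ℝ) < x ^ r₁ := Real.rpow_pos_of_pos hp r₁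
  have hkey : x ^ (r₁ * r₂) * (ρ (D₁ x) / x ^ r₁) ^ r₂ = ρ (D₁ x) ^ r₂ := by
    rw [Real.rpow_mul hp.le, Real.div_rpow hR.1.le hxr.le]
    field_simp
  rw [hD₂ _ hR, add_sub_cancel, hg_def]
  rw [← mul_assoc, hkey]
end

section
/- Let H(x) = k x² + O(x³) − β₁ − (x + β₂)^{s}(A(β) + φ(x + β₂, β)) with k > 0, 1 < s < 2, A continuous and positive, and φ, together with (x+β₂)∂φ/∂x and (x+β₂)²∂²φ/∂x², tending to 0 as its arguments tend to 0. Then H''(x) → −∞ as (x, β) → 0 with x + β₂ > 0; consequently, for ‖(x, β)‖ small enough, H is strictly concave on its domain {x > 0 : x + β₂ > 0}, and therefore H has at most two zeros there. -/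
open Filter Topology Set

private lemma aux_concave_three {D : Set ℝ} {f : ℝ → ℝ} (h : StrictConcaveOn ℝ D f)
    {a b c : ℝ} (ha : a ∈ D) (hb : b ∈ D) (hc : c ∈ D) (hab : a < b) (hbc : b < c)
    (fa : f a = 0) (fb : f b = 0) (fc : f c = 0) : False := by
  have hac : a < c := hab.trans hbc
  have hca : (0:ℝ) < c - a := by linarith
  have h1 : 0 < (c - b)/(c - a) := div_pos (by linarith) hca
  have h2 : 0 < (b - a)/(c - a) := div_pos (by linarith) hca
  have hsum : (c - b)/(c - a) + (b - a)/(c - a) = 1 := by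
    field_simp
    ring
  have hcomb : ((c - b)/(c - a)) • a + ((b - a)/(c - a)) • c = b := by
    simp only [smul_eq_mul]
    field_simp
    ring
  have := h.2 ha hc hac.ne h1 h2 hsum
  rw [hcomb, fa, fc, fb] at this
  simp at this

theorem stmt_15 (k s : ℝ) (hk : 0 < k) (hs1 : 1 < s) (hs2 : s < 2)
    (R R' R'' : ℝ → ℝ) (CR : ℝ)
    (hRd : ∀ x : ℝ, HasDerivAt R (R' x) x)
    (hRd' : ∀ x : ℝ, HasDerivAt R' (R'' x) x)
    (hRb : ∀ᶠ x in 𝓝 (0:ℝ), |R x| ≤ CR * |x| ^ 3 ∧ |R' x| ≤ CR * x ^ 2 ∧ |R'' x| ≤ CR * |x|)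
    (A : ℝ × ℝ → ℝ) (hA : Continuous A) (hApos : ∀ β : ℝ × ℝ, 0 < A β)
    (φ φu φuu : ℝ → ℝ × ℝ → ℝ)
    (hφd : ∀ u : ℝ, 0 < u → ∀ β : ℝ × ℝ, HasDerivAt (fun u => φ u β) (φu u β) u)
    (hφud : ∀ u : ℝ, 0 < u → ∀ β : ℝ × ℝ, HasDerivAt (fun u => φu u β) (φuu u β) u)
    (hφ0 : Tendsto (fun q : ℝ × (ℝ × ℝ) => φ q.1 q.2)
      (𝓝[{q : ℝ × (ℝ × ℝ) | 0 < q.1}] (0, 0)) (𝓝 0))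
    (hφu0 : Tendsto (fun q : ℝ × (ℝ × ℝ) => q.1 * φu q.1 q.2)
      (𝓝[{q : ℝ × (ℝ × ℝ) | 0 < q.1}] (0, 0)) (𝓝 0))
    (hφuu0 : Tendsto (fun q : ℝ × (ℝ × ℝ) => q.1 ^ 2 * φuu q.1 q.2)
      (𝓝[{q : ℝ × (ℝ × ℝ) | 0 < q.1}] (0, 0)) (𝓝 0))
    (H : ℝ → ℝ × ℝ → ℝ)
    (hH : ∀ x : ℝ, ∀ β : ℝ × ℝ,
      H x β = k * x ^ 2 + R x - β.1 - (x + β.2) ^ s * (A β + φ (x + β.2) β)) :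
    Tendsto (fun q : ℝ × (ℝ × ℝ) => deriv (deriv (fun x => H x q.2)) q.1)
      (𝓝[{q : ℝ × (ℝ × ℝ) | 0 < q.1 ∧ 0 < q.1 + q.2.2}] (0, 0)) atBot ∧
    ∃ η > (0:ℝ), ∀ β : ℝ × ℝ, ‖β‖ < η →
      StrictConcaveOn ℝ (Set.Ioo (max 0 (-β.2)) η) (fun x => H x β) ∧
      ∀ x₁ ∈ Set.Ioo (max 0 (-β.2)) η, ∀ x₂ ∈ Set.Ioo (max 0 (-β.2)) η,
        ∀ x₃ ∈ Set.Ioo (max 0 (-β.2)) η,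
        H x₁ β = 0 → H x₂ β = 0 → H x₃ β = 0 → x₁ = x₂ ∨ x₁ = x₃ ∨ x₂ = x₃ := by
  -- first derivative
  have hderiv1 : ∀ β : ℝ × ℝ, ∀ x : ℝ, 0 < x + β.2 →
      HasDerivAt (fun x => H x β)
        (2*k*x + R' x - (s * (x+β.2)^(s-1) * (A β + φ (x+β.2) β)
          + (x+β.2)^s * φu (x+β.2) β)) x := by
    intro β x hu
    have hfun : (fun x => H x β)
        = fun x => k * x ^ 2 + R x - β.1 - (x + β.2) ^ s * (A β + φ (x + β.2) β) :=
      funext fun x => hH x β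
    rw [hfun]
    have h1 : HasDerivAt (fun x : ℝ => x + β.2) 1 x := (hasDerivAt_id x).add_const _
    have hpow : HasDerivAt (fun y : ℝ => (y+β.2)^s) (s * (x+β.2)^(s-1)) x := by
      have h := HasDerivAt.comp x
        (Real.hasDerivAt_rpow_const (x := x + β.2) (p := s) (Or.inl hu.ne')) h1
      simpa [Function.comp_def] using h
    have hφx : HasDerivAt (fun y : ℝ => φ (y+β.2) β) (φu (x+β.2) β) x := by
      have h := HasDerivAt.comp x (hφd (x + β.2) hu β) h1
      simpa [Function.comp_def] using h
    have hsq : HasDerivAt (fun y : ℝ => k*y^2) (2*k*x) x := by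
      have h := (hasDerivAt_pow 2 x).const_mul k
      norm_num at h
      refine h.congr_deriv ?_
      ring
    have hsum : HasDerivAt (fun y : ℝ => A β + φ (y+β.2) β) (φu (x+β.2) β) x :=
      hφx.const_add (A β)
    exact ((hsq.add (hRd x)).sub_const β.1).sub (hpow.mul hsum)
  -- second derivative
  have hderiv2 : ∀ β : ℝ × ℝ, ∀ x : ℝ, 0 < x + β.2 →
      HasDerivAt (fun x => 2*k*x + R' x - (s * (x+β.2)^(s-1) * (A β + φ (x+β.2) β)
          + (x+β.2)^s * φu (x+β.2) β))
        (2*k + R'' x - (x+β.2)^(s-2) * (s*(s-1)*(A β + φ (x+β.2) β)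
          + (2*s*((x+β.2) * φu (x+β.2) β) + (x+β.2)^2 * φuu (x+β.2) β))) x := by
    intro β x hu
    have h1 : HasDerivAt (fun x : ℝ => x + β.2) 1 x := (hasDerivAt_id x).add_const _
    have hpow : HasDerivAt (fun y : ℝ => (y+β.2)^s) (s * (x+β.2)^(s-1)) x := by
      have h := HasDerivAt.comp x
        (Real.hasDerivAt_rpow_const (x := x + β.2) (p := s) (Or.inl hu.ne')) h1
      simpa [Function.comp_def] using h
    have hpow1 : HasDerivAt (fun y : ℝ => (y+β.2)^(s-1)) ((s-1) * (x+β.2)^(s-2)) x := by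
      have h := HasDerivAt.comp x
        (Real.hasDerivAt_rpow_const (x := x + β.2) (p := s-1) (Or.inl hu.ne')) h1
      rw [show s-1-1 = s-2 by ring] at h
      simpa [Function.comp_def] using h
    have hφx : HasDerivAt (fun y : ℝ => φ (y+β.2) β) (φu (x+β.2) β) x := by
      have h := HasDerivAt.comp x (hφd (x + β.2) hu β) h1
      simpa [Function.comp_def] using h
    have hφux : HasDerivAt (fun y : ℝ => φu (y+β.2) β) (φuu (x+β.2) β) x := by
      have h := HasDerivAt.comp x (hφud (x + β.2) hu β) h1
      simpa [Function.comp_def] using h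
    have hlin : HasDerivAt (fun y : ℝ => 2*k*y) (2*k) x := by
      simpa using (hasDerivAt_id x).const_mul (2*k)
    have hsum : HasDerivAt (fun y : ℝ => A β + φ (y+β.2) β) (φu (x+β.2) β) x :=
      hφx.const_add (A β)
    have hmain := (hlin.add (hRd' x)).sub
      (((hpow1.const_mul s).mul hsum).add (hpow.mul hφux))
    have e1 : (x+β.2)^(s-1) = (x+β.2)^(s-2) * (x+β.2) := by
      rw [show s-1 = s-2+1 by ring, Real.rpow_add hu, Real.rpow_one]
    have hu2 : (x+β.2)^(2:ℕ) ≠ 0 := pow_ne_zero _ hu.ne'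
    have e2 : (x+β.2)^s = (x+β.2)^(s-2) * (x+β.2)^(2:ℕ) := by
      rw [Real.rpow_sub hu s 2, show ((2:ℝ)) = ((2:ℕ):ℝ) by norm_num,
        Real.rpow_natCast, div_mul_cancel₀ _ hu2]
    have heq : 2*k + R'' x - (x+β.2)^(s-2) * (s*(s-1)*(A β + φ (x+β.2) β)
          + (2*s*((x+β.2) * φu (x+β.2) β) + (x+β.2)^2 * φuu (x+β.2) β))
        = 2*k + R'' x - (s * ((s-1) * (x+β.2)^(s-2)) * (A β + φ (x+β.2) β)
            + s * (x+β.2)^(s-1) * φu (x+β.2) β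
          + (s * (x+β.2)^(s-1) * φu (x+β.2) β + (x+β.2)^s * φuu (x+β.2) β)) := by
      rw [e1, e2]; ring
    rw [heq]
    exact hmain
  -- formula for the second derivative
  have hdd : ∀ β : ℝ × ℝ, ∀ x : ℝ, 0 < x + β.2 →
      deriv (deriv (fun x => H x β)) x
        = 2*k + R'' x - (x+β.2)^(s-2) * (s*(s-1)*(A β + φ (x+β.2) β)
          + (2*s*((x+β.2) * φu (x+β.2) β) + (x+β.2)^2 * φuu (x+β.2) β)) := by
    intro β x hu
    have hev : deriv (fun x => H x β)
        =ᶠ[𝓝 x] (fun x => 2*k*x + R' x - (s * (x+β.2)^(s-1) * (A β + φ (x+β.2) β)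
          + (x+β.2)^s * φu (x+β.2) β)) := by
      have hU : Set.Ioi (-β.2) ∈ 𝓝 x := Ioi_mem_nhds (by linarith)
      filter_upwards [hU] with y hy
      exact (hderiv1 β y (by simp only [Set.mem_Ioi] at hy; linarith)).deriv
    rw [Filter.EventuallyEq.deriv_eq hev]
    exact (hderiv2 β x hu).deriv
  -- limits of the pieces
  have hmap : Tendsto (fun q : ℝ × (ℝ × ℝ) => (q.1 + q.2.2, q.2))
      (𝓝[{q : ℝ × (ℝ × ℝ) | 0 < q.1 ∧ 0 < q.1 + q.2.2}] (0, 0))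
      (𝓝[{q : ℝ × (ℝ × ℝ) | 0 < q.1}] (0, 0)) := by
    have h := ContinuousWithinAt.tendsto_nhdsWithin
      (s := {q : ℝ × (ℝ × ℝ) | 0 < q.1 ∧ 0 < q.1 + q.2.2})
      (t := {q : ℝ × (ℝ × ℝ) | 0 < q.1}) (x := ((0:ℝ), ((0:ℝ),(0:ℝ))))
      (f := fun q : ℝ × (ℝ × ℝ) => (q.1 + q.2.2, q.2))
      (((continuous_fst.add continuous_snd.snd).prodMk continuous_snd).continuousWithinAt)
      (fun q hq => hq.2)
    simpa [Prod.mk_zero_zero] using h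
  have hu_lim : Tendsto (fun q : ℝ × (ℝ × ℝ) => q.1 + q.2.2)
      (𝓝[{q : ℝ × (ℝ × ℝ) | 0 < q.1 ∧ 0 < q.1 + q.2.2}] (0, 0)) (𝓝[>] (0:ℝ)) := by
    have h := ContinuousWithinAt.tendsto_nhdsWithin
      (s := {q : ℝ × (ℝ × ℝ) | 0 < q.1 ∧ 0 < q.1 + q.2.2})
      (t := Set.Ioi (0:ℝ)) (x := ((0:ℝ), ((0:ℝ),(0:ℝ))))
      (f := fun q : ℝ × (ℝ × ℝ) => q.1 + q.2.2)
      ((continuous_fst.add continuous_snd.snd).continuousWithinAt)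
      (fun q hq => hq.2)
    simpa [Prod.mk_zero_zero] using h
  have hpow_top : Tendsto (fun q : ℝ × (ℝ × ℝ) => (q.1 + q.2.2)^(s-2))
      (𝓝[{q : ℝ × (ℝ × ℝ) | 0 < q.1 ∧ 0 < q.1 + q.2.2}] (0, 0)) atTop := by
    have h2s : (0:ℝ) < 2 - s := by linarith
    have hinv : Tendsto (fun u : ℝ => (u⁻¹)^(2-s)) (𝓝[>] (0:ℝ)) atTop :=
      (tendsto_rpow_atTop h2s).comp tendsto_inv_nhdsGT_zero
    have hps : Tendsto (fun u : ℝ => u^(s-2)) (𝓝[>] (0:ℝ)) atTop := by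
      refine hinv.congr' ?_
      filter_upwards [self_mem_nhdsWithin] with u hu
      have hu' : (0:ℝ) < u := hu
      rw [Real.inv_rpow hu'.le, ← Real.rpow_neg hu'.le]
      ring_nf
    exact hps.comp hu_lim
  have hGT : Tendsto (fun q : ℝ × (ℝ × ℝ) =>
      s*(s-1)*(A q.2 + φ q.1 q.2) + (2*s*(q.1 * φu q.1 q.2) + q.1^2 * φuu q.1 q.2))
      (𝓝[{q : ℝ × (ℝ × ℝ) | 0 < q.1}] (0, 0)) (𝓝 (s*(s-1)*A (0,0))) := by
    have hA0 : Tendsto (fun q : ℝ × (ℝ × ℝ) => A q.2)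
        (𝓝[{q : ℝ × (ℝ × ℝ) | 0 < q.1}] (0, 0)) (𝓝 (A (0,0))) :=
      ((hA.comp continuous_snd).tendsto (0,0)).mono_left nhdsWithin_le_nhds
    have h := (((hA0.add hφ0).const_mul (s*(s-1)))).add
      ((hφu0.const_mul (2*s)).add hφuu0)
    simpa using h
  have hGS : Tendsto (fun q : ℝ × (ℝ × ℝ) =>
      s*(s-1)*(A q.2 + φ (q.1+q.2.2) q.2) + (2*s*((q.1+q.2.2) * φu (q.1+q.2.2) q.2)
        + (q.1+q.2.2)^2 * φuu (q.1+q.2.2) q.2))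
      (𝓝[{q : ℝ × (ℝ × ℝ) | 0 < q.1 ∧ 0 < q.1 + q.2.2}] (0, 0))
      (𝓝 (s*(s-1)*A (0,0))) := hGT.comp hmap
  have hC : (0:ℝ) < s*(s-1)*A (0,0) :=
    mul_pos (mul_pos (by linarith) (by linarith)) (hApos _)
  have hTop : Tendsto (fun q : ℝ × (ℝ × ℝ) =>
      (q.1+q.2.2)^(s-2) * (s*(s-1)*(A q.2 + φ (q.1+q.2.2) q.2)
        + (2*s*((q.1+q.2.2) * φu (q.1+q.2.2) q.2) + (q.1+q.2.2)^2 * φuu (q.1+q.2.2) q.2)))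
      (𝓝[{q : ℝ × (ℝ × ℝ) | 0 < q.1 ∧ 0 < q.1 + q.2.2}] (0, 0)) atTop :=
    hpow_top.atTop_mul_pos hC hGS
  have hR0 : Tendsto R'' (𝓝 (0:ℝ)) (𝓝 0) := by
    have hg : Tendsto (fun x : ℝ => CR * |x|) (𝓝 (0:ℝ)) (𝓝 0) := by
      simpa using ((continuous_abs.tendsto (0:ℝ)).const_mul CR)
    exact squeeze_zero_norm'
      (hRb.mono fun x hx => by simpa [Real.norm_eq_abs] using hx.2.2) hg
  have hfst : Tendsto (fun q : ℝ × (ℝ × ℝ) => q.1)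
      (𝓝[{q : ℝ × (ℝ × ℝ) | 0 < q.1 ∧ 0 < q.1 + q.2.2}] (0, 0)) (𝓝 0) :=
    (continuous_fst.tendsto _).mono_left nhdsWithin_le_nhds
  have hconst : Tendsto (fun q : ℝ × (ℝ × ℝ) => 2*k + R'' q.1)
      (𝓝[{q : ℝ × (ℝ × ℝ) | 0 < q.1 ∧ 0 < q.1 + q.2.2}] (0, 0)) (𝓝 (2*k)) := by
    have h := (tendsto_const_nhds (x := (2*k : ℝ))
      (f := 𝓝[{q : ℝ × (ℝ × ℝ) | 0 < q.1 ∧ 0 < q.1 + q.2.2}] (0, 0))).add (hR0.comp hfst)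
    simpa [Function.comp] using h
  have hF : Tendsto (fun q : ℝ × (ℝ × ℝ) =>
      2*k + R'' q.1 - (q.1+q.2.2)^(s-2) * (s*(s-1)*(A q.2 + φ (q.1+q.2.2) q.2)
        + (2*s*((q.1+q.2.2) * φu (q.1+q.2.2) q.2) + (q.1+q.2.2)^2 * φuu (q.1+q.2.2) q.2)))
      (𝓝[{q : ℝ × (ℝ × ℝ) | 0 < q.1 ∧ 0 < q.1 + q.2.2}] (0, 0)) atBot := by
    have h := hconst.add_atBot (tendsto_neg_atTop_atBot.comp hTop)
    refine h.congr fun q => ?_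
    simp [Function.comp, sub_eq_add_neg]
  have part1 : Tendsto (fun q : ℝ × (ℝ × ℝ) => deriv (deriv (fun x => H x q.2)) q.1)
      (𝓝[{q : ℝ × (ℝ × ℝ) | 0 < q.1 ∧ 0 < q.1 + q.2.2}] (0, 0)) atBot := by
    refine hF.congr' ?_
    filter_upwards [self_mem_nhdsWithin] with q hq
    exact (hdd q.2 q.1 hq.2).symm
  refine ⟨part1, ?_⟩
  have hneg : ∀ᶠ q in 𝓝[{q : ℝ × (ℝ × ℝ) | 0 < q.1 ∧ 0 < q.1 + q.2.2}] (0, 0),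
      deriv (deriv (fun x => H x q.2)) q.1 < 0 :=
    part1.eventually (eventually_lt_atBot 0)
  rw [eventually_nhdsWithin_iff, Metric.eventually_nhds_iff] at hneg
  obtain ⟨ε, hε, hball⟩ := hneg
  refine ⟨ε, hε, ?_⟩
  intro β hβ
  have hx' : ∀ x ∈ Set.Ioo (max 0 (-β.2)) ε, deriv (deriv (fun y => H y β)) x < 0 := by
    intro x hx
    have hx0 : 0 < x := lt_of_le_of_lt (le_max_left 0 (-β.2)) hx.1
    have hxb : 0 < x + β.2 := by
      have := lt_of_le_of_lt (le_max_right 0 (-β.2)) hx.1; linarith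
    have hdist : dist ((x, β) : ℝ × (ℝ × ℝ)) (0, 0) < ε := by
      rw [Prod.dist_eq]
      refine max_lt ?_ ?_
      · rw [Real.dist_eq, sub_zero, abs_of_pos hx0]; exact hx.2
      · rw [dist_zero_right]; exact hβ
    exact hball hdist ⟨hx0, hxb⟩
  have hconc : StrictConcaveOn ℝ (Set.Ioo (max 0 (-β.2)) ε) (fun x => H x β) := by
    refine strictConcaveOn_of_deriv2_neg (convex_Ioo _ _) ?_ ?_
    · intro x hx
      have hxb : 0 < x + β.2 := by
        have := lt_of_le_of_lt (le_max_right 0 (-β.2)) hx.1; linarith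
      exact ((hderiv1 β x hxb).differentiableAt).continuousAt.continuousWithinAt
    · intro x hx
      rw [interior_Ioo] at hx
      have h2 : deriv^[2] (fun x => H x β) x = deriv (deriv (fun x => H x β)) x := by
        simp [Function.iterate_succ, Function.iterate_zero, Function.comp]
      rw [h2]
      exact hx' x hx
  refine ⟨hconc, ?_⟩
  intro x₁ h₁ x₂ h₂ x₃ h₃ f1 f2 f3
  by_contra hcon
  push_neg at hcon
  obtain ⟨h12, h13, h23⟩ := hcon
  rcases h12.lt_or_gt with h | h <;> rcases h13.lt_or_gt with h' | h' <;>
    rcases h23.lt_or_gt with h'' | h''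
  · exact aux_concave_three hconc h₁ h₂ h₃ h h'' f1 f2 f3
  · exact aux_concave_three hconc h₁ h₃ h₂ h' h'' f1 f3 f2
  · exact aux_concave_three hconc h₃ h₁ h₂ h' h f3 f1 f2
  · exact aux_concave_three hconc h₃ h₁ h₂ h' h f3 f1 f2
  · exact aux_concave_three hconc h₂ h₁ h₃ h h' f2 f1 f3
  · linarith
  · exact aux_concave_three hconc h₂ h₃ h₁ h'' h' f2 f3 f1
  · exact aux_concave_three hconc h₃ h₂ h₁ h'' h f3 f2 f1
end

section
/- Let H(x) = k x² + R(x) − β₁ − (x + β₂)^{s}(A(β) + φ(x + β₂, β)) with k > 0, s > 2, R(x) = O(x³) with R''(x) = O(x), A positive and continuous, and φ and its scaled derivatives tending to 0. Then H''(x) → 2k > 0 as (x, β) → 0 with x + β₂ > 0; consequently, for ‖(x, β)‖ small enough, H is strictly convex on {x > 0 : x + β₂ > 0} and has at most two zeros there. -/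
open Filter Topology Set

private lemma aux1 (k s b1 c Aβ : ℝ) (R R' : ℝ → ℝ) (φb φub : ℝ → ℝ)
    (hRd : ∀ x, HasDerivAt R (R' x) x)
    (hφd : ∀ u, 0 < u → HasDerivAt φb (φub u) u)
    {x : ℝ} (hx : 0 < x + c) :
    HasDerivAt (fun x => k * x ^ 2 + R x - b1 - (x + c) ^ s * (Aβ + φb (x + c)))
      (2 * k * x + R' x -
        (s * ((x + c) ^ (s - 1) * (Aβ + φb (x + c))) + (x + c) ^ s * φub (x + c))) x := by
  have hid : HasDerivAt (fun y : ℝ => y + c) 1 x := (hasDerivAt_id x).add_const c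
  have hpow : HasDerivAt (fun y : ℝ => (y + c) ^ s) (1 * s * (x + c) ^ (s - 1)) x :=
    hid.rpow_const (Or.inl (ne_of_gt hx))
  have hφ : HasDerivAt (fun y => φb (y + c)) (φub (x + c) * 1) x := (hφd _ hx).comp x hid
  have hsq : HasDerivAt (fun y : ℝ => k * y ^ 2) (k * ((2 : ℕ) * x ^ (2 - 1))) x :=
    (hasDerivAt_pow 2 x).const_mul k
  have h := ((hsq.add (hRd x)).sub_const b1).sub
    (hpow.mul ((hasDerivAt_const x Aβ).add hφ))
  refine h.congr_deriv ?_
  push_cast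
  simp only [Pi.add_apply]; ring

private lemma aux2 (k s c Aβ : ℝ) (R' R'' : ℝ → ℝ) (φb φub φuub : ℝ → ℝ)
    (hRd' : ∀ x, HasDerivAt R' (R'' x) x)
    (hφd : ∀ u, 0 < u → HasDerivAt φb (φub u) u)
    (hφud : ∀ u, 0 < u → HasDerivAt φub (φuub u) u)
    {x : ℝ} (hx : 0 < x + c) :
    HasDerivAt (fun x => 2 * k * x + R' x -
        (s * ((x + c) ^ (s - 1) * (Aβ + φb (x + c))) + (x + c) ^ s * φub (x + c)))
      (2 * k + R'' x -
        (s * (s - 1) * ((x + c) ^ (s - 2) * (Aβ + φb (x + c))) +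
          2 * s * ((x + c) ^ (s - 1) * φub (x + c)) + (x + c) ^ s * φuub (x + c))) x := by
  have hid : HasDerivAt (fun y : ℝ => y + c) 1 x := (hasDerivAt_id x).add_const c
  have hpow : HasDerivAt (fun y : ℝ => (y + c) ^ s) (1 * s * (x + c) ^ (s - 1)) x :=
    hid.rpow_const (Or.inl (ne_of_gt hx))
  have hpow1 : HasDerivAt (fun y : ℝ => (y + c) ^ (s - 1))
      (1 * (s - 1) * (x + c) ^ (s - 1 - 1)) x :=
    hid.rpow_const (Or.inl (ne_of_gt hx))
  have e : s - 1 - 1 = s - 2 := by ring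
  rw [e] at hpow1
  have hφ : HasDerivAt (fun y => φb (y + c)) (φub (x + c) * 1) x := (hφd _ hx).comp x hid
  have hφu : HasDerivAt (fun y => φub (y + c)) (φuub (x + c) * 1) x := (hφud _ hx).comp x hid
  have hlin : HasDerivAt (fun y : ℝ => 2 * k * y) (2 * k * 1) x :=
    (hasDerivAt_id x).const_mul (2 * k)
  have h := ((hlin.add (hRd' x)).sub
    ((((hpow1.mul ((hasDerivAt_const x Aβ).add hφ)).const_mul s)).add
      (hpow.mul hφu)))
  refine h.congr_deriv ?_
  simp only [Pi.add_apply]; ring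

private lemma aux3 (k s b1 c Aβ : ℝ) (R R' R'' : ℝ → ℝ) (φb φub φuub : ℝ → ℝ)
    (hRd : ∀ x, HasDerivAt R (R' x) x)
    (hRd' : ∀ x, HasDerivAt R' (R'' x) x)
    (hφd : ∀ u, 0 < u → HasDerivAt φb (φub u) u)
    (hφud : ∀ u, 0 < u → HasDerivAt φub (φuub u) u)
    {x : ℝ} (hx : 0 < x + c) :
    deriv (deriv (fun x => k * x ^ 2 + R x - b1 - (x + c) ^ s * (Aβ + φb (x + c)))) x =
      2 * k + R'' x -
        (s * (s - 1) * ((x + c) ^ (s - 2) * (Aβ + φb (x + c))) +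
          2 * s * ((x + c) ^ (s - 1) * φub (x + c)) + (x + c) ^ s * φuub (x + c)) := by
  have hopen : IsOpen {y : ℝ | 0 < y + c} :=
    isOpen_lt continuous_const (continuous_id.add continuous_const)
  have hev : deriv (fun x => k * x ^ 2 + R x - b1 - (x + c) ^ s * (Aβ + φb (x + c)))
      =ᶠ[𝓝 x] fun x => 2 * k * x + R' x -
        (s * ((x + c) ^ (s - 1) * (Aβ + φb (x + c))) + (x + c) ^ s * φub (x + c)) :=
    (hopen.eventually_mem hx).mono fun y hy =>
      (aux1 k s b1 c Aβ R R' φb φub hRd hφd hy).deriv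
  rw [hev.deriv_eq]
  exact (aux2 k s c Aβ R' R'' φb φub φuub hRd' hφd hφud hx).deriv

private lemma three_zeros {f : ℝ → ℝ} {s : Set ℝ} (hf : StrictConvexOn ℝ s f)
    {a b c : ℝ} (ha : a ∈ s) (hb : b ∈ s) (hc : c ∈ s)
    (hfa : f a = 0) (hfb : f b = 0) (hfc : f c = 0) : a = b ∨ a = c ∨ b = c := by
  by_contra h
  push_neg at h
  obtain ⟨hab, hac, hbc⟩ := h
  have key : ∀ p q r : ℝ, p ∈ s → q ∈ s → r ∈ s → p < q → q < r →
      f p = 0 → f q = 0 → f r = 0 → False := by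
    intro p q r hp hq hr hpq hqr hfp hfq hfr
    set t := (r - q) / (r - p) with ht
    have hrp : (0:ℝ) < r - p := by linarith
    have ht0 : 0 < t := div_pos (by linarith) hrp
    have ht1 : t < 1 := (div_lt_one hrp).2 (by linarith)
    have hcomb : t • p + (1 - t) • r = q := by
      simp only [smul_eq_mul, ht]
      field_simp
      ring
    have hlt := hf.2 hp hr (ne_of_lt (lt_trans hpq hqr)) ht0
      (show (0:ℝ) < 1 - t by linarith) (show t + (1 - t) = 1 by ring)
    rw [hcomb, hfp, hfq, hfr] at hlt
    simp at hlt
  rcases lt_trichotomy a b with h1 | h1 | h1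
  · rcases lt_trichotomy b c with h2 | h2 | h2
    · exact key a b c ha hb hc h1 h2 hfa hfb hfc
    · exact hbc h2
    · rcases lt_trichotomy a c with h3 | h3 | h3
      · exact key a c b ha hc hb h3 h2 hfa hfc hfb
      · exact hac h3
      · exact key c a b hc ha hb h3 h1 hfc hfa hfb
  · exact hab h1
  · rcases lt_trichotomy a c with h2 | h2 | h2
    · exact key b a c hb ha hc h1 h2 hfb hfa hfc
    · exact hac h2
    · rcases lt_trichotomy b c with h3 | h3 | h3
      · exact key b c a hb hc ha h3 h2 hfb hfc hfa
      · exact hbc h3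
      · exact key c b a hc hb ha h3 h1 hfc hfb hfa

set_option maxHeartbeats 1000000 in
theorem stmt_16 (k s : ℝ) (hk : 0 < k) (hs : 2 < s)
    (R R' R'' : ℝ → ℝ) (CR : ℝ)
    (hRd : ∀ x : ℝ, HasDerivAt R (R' x) x)
    (hRd' : ∀ x : ℝ, HasDerivAt R' (R'' x) x)
    (hRb : ∀ᶠ x in 𝓝 (0:ℝ), |R x| ≤ CR * |x| ^ 3 ∧ |R' x| ≤ CR * x ^ 2 ∧ |R'' x| ≤ CR * |x|)
    (A : ℝ × ℝ → ℝ) (hA : Continuous A) (hApos : ∀ β : ℝ × ℝ, 0 < A β)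
    (φ φu φuu : ℝ → ℝ × ℝ → ℝ)
    (hφd : ∀ u : ℝ, 0 < u → ∀ β : ℝ × ℝ, HasDerivAt (fun u => φ u β) (φu u β) u)
    (hφud : ∀ u : ℝ, 0 < u → ∀ β : ℝ × ℝ, HasDerivAt (fun u => φu u β) (φuu u β) u)
    (hφ0 : Tendsto (fun q : ℝ × (ℝ × ℝ) => φ q.1 q.2)
      (𝓝[{q : ℝ × (ℝ × ℝ) | 0 < q.1}] (0, 0)) (𝓝 0))
    (hφu0 : Tendsto (fun q : ℝ × (ℝ × ℝ) => q.1 * φu q.1 q.2)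
      (𝓝[{q : ℝ × (ℝ × ℝ) | 0 < q.1}] (0, 0)) (𝓝 0))
    (hφuu0 : Tendsto (fun q : ℝ × (ℝ × ℝ) => q.1 ^ 2 * φuu q.1 q.2)
      (𝓝[{q : ℝ × (ℝ × ℝ) | 0 < q.1}] (0, 0)) (𝓝 0))
    (H : ℝ → ℝ × ℝ → ℝ)
    (hH : ∀ x : ℝ, ∀ β : ℝ × ℝ,
      H x β = k * x ^ 2 + R x - β.1 - (x + β.2) ^ s * (A β + φ (x + β.2) β)) :
    Tendsto (fun q : ℝ × (ℝ × ℝ) => deriv (deriv (fun x => H x q.2)) q.1)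
      (𝓝[{q : ℝ × (ℝ × ℝ) | 0 < q.1 ∧ 0 < q.1 + q.2.2}] (0, 0)) (𝓝 (2 * k)) ∧
    ∃ η > (0:ℝ), ∀ β : ℝ × ℝ, ‖β‖ < η →
      StrictConvexOn ℝ (Set.Ioo (max 0 (-β.2)) η) (fun x => H x β) ∧
      ∀ x₁ ∈ Set.Ioo (max 0 (-β.2)) η, ∀ x₂ ∈ Set.Ioo (max 0 (-β.2)) η,
        ∀ x₃ ∈ Set.Ioo (max 0 (-β.2)) η,
        H x₁ β = 0 → H x₂ β = 0 → H x₃ β = 0 → x₁ = x₂ ∨ x₁ = x₃ ∨ x₂ = x₃ := by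
  have hfeq : ∀ β : ℝ × ℝ, (fun x => H x β) =
      fun x => k * x ^ 2 + R x - β.1 - (x + β.2) ^ s * (A β + φ (x + β.2) β) :=
    fun β => funext fun x => hH x β
  -- the second derivative formula
  set G2 : ℝ → ℝ × ℝ → ℝ := fun x β =>
    2 * k + R'' x -
      (s * (s - 1) * ((x + β.2) ^ (s - 2) * (A β + φ (x + β.2) β)) +
        2 * s * ((x + β.2) ^ (s - 1) * φu (x + β.2) β) +
        (x + β.2) ^ s * φuu (x + β.2) β) with hG2
  have hd2 : ∀ (x : ℝ) (β : ℝ × ℝ), 0 < x + β.2 →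
      deriv (deriv (fun x => H x β)) x = G2 x β := by
    intro x β hx
    rw [hfeq β]
    exact aux3 k s β.1 β.2 (A β) R R' R'' (fun u => φ u β) (fun u => φu u β)
      (fun u => φuu u β) hRd hRd' (fun u hu => hφd u hu β) (fun u hu => hφud u hu β) hx
  set S : Set (ℝ × (ℝ × ℝ)) := {q | 0 < q.1 ∧ 0 < q.1 + q.2.2} with hSdef
  -- the map q ↦ (q.1 + q.2.2, q.2)
  have hF : Tendsto (fun q : ℝ × (ℝ × ℝ) => ((q.1 + q.2.2, q.2) : ℝ × (ℝ × ℝ)))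
      (𝓝[S] (0, 0)) (𝓝[{q : ℝ × (ℝ × ℝ) | 0 < q.1}] (0, 0)) := by
    rw [tendsto_nhdsWithin_iff]
    constructor
    · have : Tendsto (fun q : ℝ × (ℝ × ℝ) => ((q.1 + q.2.2, q.2) : ℝ × (ℝ × ℝ)))
          (𝓝 (0, 0)) (𝓝 ((0 : ℝ) + (0 : ℝ), (0 : ℝ × ℝ))) :=
        ((continuous_fst.add (continuous_snd.snd)).prodMk continuous_snd).tendsto _
      simpa using this.mono_left nhdsWithin_le_nhds
    · exact eventually_mem_nhdsWithin.mono fun q hq => hq.2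
  have hu_to : Tendsto (fun q : ℝ × (ℝ × ℝ) => q.1 + q.2.2) (𝓝[S] (0, 0)) (𝓝 0) := by
    have : Tendsto (fun q : ℝ × (ℝ × ℝ) => q.1 + q.2.2) (𝓝 (0, 0)) (𝓝 ((0:ℝ) + 0)) :=
      (continuous_fst.add (continuous_snd.snd)).tendsto _
    simpa using this.mono_left nhdsWithin_le_nhds
  have hupow : Tendsto (fun q : ℝ × (ℝ × ℝ) => (q.1 + q.2.2) ^ (s - 2))
      (𝓝[S] (0, 0)) (𝓝 0) := by
    have hc : Tendsto (fun u : ℝ => u ^ (s - 2)) (𝓝 0) (𝓝 ((0:ℝ) ^ (s - 2))) :=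
      (Real.continuousAt_rpow_const 0 (s - 2) (Or.inr (by linarith))).tendsto
    rw [Real.zero_rpow (by linarith : s - 2 ≠ 0)] at hc
    exact hc.comp hu_to
  have hφt : Tendsto (fun q : ℝ × (ℝ × ℝ) => φ (q.1 + q.2.2) q.2) (𝓝[S] (0, 0)) (𝓝 0) :=
    hφ0.comp hF
  have hφut : Tendsto (fun q : ℝ × (ℝ × ℝ) => (q.1 + q.2.2) * φu (q.1 + q.2.2) q.2)
      (𝓝[S] (0, 0)) (𝓝 0) := hφu0.comp hF
  have hφuut : Tendsto (fun q : ℝ × (ℝ × ℝ) => (q.1 + q.2.2) ^ 2 * φuu (q.1 + q.2.2) q.2)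
      (𝓝[S] (0, 0)) (𝓝 0) := hφuu0.comp hF
  have hAt : Tendsto (fun q : ℝ × (ℝ × ℝ) => A q.2) (𝓝[S] (0, 0)) (𝓝 (A (0, 0))) :=
    (hA.tendsto _).comp ((continuous_snd.tendsto _).mono_left nhdsWithin_le_nhds)
  have hRt : Tendsto (fun q : ℝ × (ℝ × ℝ) => R'' q.1) (𝓝[S] (0, 0)) (𝓝 0) := by
    have hx_to : Tendsto (fun q : ℝ × (ℝ × ℝ) => q.1) (𝓝[S] (0, 0)) (𝓝 0) :=
      (continuous_fst.tendsto _).mono_left nhdsWithin_le_nhds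
    have hR0 : Tendsto R'' (𝓝 (0:ℝ)) (𝓝 0) := by
      apply squeeze_zero_norm' (a := fun x => CR * |x|)
      · exact hRb.mono fun x h => by simpa [Real.norm_eq_abs] using h.2.2
      · have : Tendsto (fun x : ℝ => CR * |x|) (𝓝 0) (𝓝 (CR * |(0:ℝ)|)) :=
          (continuous_const.mul continuous_abs).tendsto _
        simpa using this
    exact hR0.comp hx_to
  -- eventual positivity of u
  have hevu : ∀ᶠ q : ℝ × (ℝ × ℝ) in 𝓝[S] (0, 0), 0 < q.1 + q.2.2 :=
    eventually_mem_nhdsWithin.mono fun q hq => hq.2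
  -- the three vanishing terms
  have hT1 : Tendsto (fun q : ℝ × (ℝ × ℝ) =>
      s * (s - 1) * ((q.1 + q.2.2) ^ (s - 2) * (A q.2 + φ (q.1 + q.2.2) q.2)))
      (𝓝[S] (0, 0)) (𝓝 0) := by
    have := (hupow.mul (hAt.add hφt)).const_mul (s * (s - 1))
    simpa using this
  have hT2 : Tendsto (fun q : ℝ × (ℝ × ℝ) =>
      2 * s * ((q.1 + q.2.2) ^ (s - 1) * φu (q.1 + q.2.2) q.2)) (𝓝[S] (0, 0)) (𝓝 0) := by
    have h0 : Tendsto (fun q : ℝ × (ℝ × ℝ) =>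
        2 * s * ((q.1 + q.2.2) ^ (s - 2) * ((q.1 + q.2.2) * φu (q.1 + q.2.2) q.2)))
        (𝓝[S] (0, 0)) (𝓝 0) := by
      have := (hupow.mul hφut).const_mul (2 * s)
      simpa using this
    apply h0.congr'
    filter_upwards [hevu] with q hq
    have : (q.1 + q.2.2) ^ (s - 1) = (q.1 + q.2.2) ^ (s - 2) * (q.1 + q.2.2) := by
      rw [← Real.rpow_add_one (ne_of_gt hq)]
      ring_nf
    rw [this]; ring
  have hT3 : Tendsto (fun q : ℝ × (ℝ × ℝ) =>
      (q.1 + q.2.2) ^ s * φuu (q.1 + q.2.2) q.2) (𝓝[S] (0, 0)) (𝓝 0) := by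
    have h0 : Tendsto (fun q : ℝ × (ℝ × ℝ) =>
        (q.1 + q.2.2) ^ (s - 2) * ((q.1 + q.2.2) ^ 2 * φuu (q.1 + q.2.2) q.2))
        (𝓝[S] (0, 0)) (𝓝 0) := by simpa using hupow.mul hφuut
    apply h0.congr'
    filter_upwards [hevu] with q hq
    have : (q.1 + q.2.2) ^ s = (q.1 + q.2.2) ^ (s - 2) * (q.1 + q.2.2) ^ 2 := by
      rw [← Real.rpow_natCast (q.1 + q.2.2) 2, ← Real.rpow_add hq]
      norm_num
    rw [this]; ring
  have hG2t : Tendsto (fun q : ℝ × (ℝ × ℝ) => G2 q.1 q.2) (𝓝[S] (0, 0)) (𝓝 (2 * k)) := by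
    have := (tendsto_const_nhds (x := 2 * k) (f := 𝓝[S] ((0, 0) : ℝ × (ℝ × ℝ))).add hRt).sub
      ((hT1.add hT2).add hT3)
    simpa [hG2] using this
  constructor
  · exact hG2t.congr' (eventually_mem_nhdsWithin.mono fun q hq => (hd2 q.1 q.2 hq.2).symm)
  · -- extract a ball where G2 > k
    have hev : ∀ᶠ q : ℝ × (ℝ × ℝ) in 𝓝[S] (0, 0), k < G2 q.1 q.2 :=
      hG2t.eventually (eventually_gt_nhds (by linarith))
    rw [eventually_nhdsWithin_iff, Metric.eventually_nhds_iff] at hev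
    obtain ⟨ε, hε, hball⟩ := hev
    refine ⟨ε, hε, fun β hβ => ?_⟩
    have hpos : ∀ x ∈ Set.Ioo (max 0 (-β.2)) ε, k < G2 x β := by
      intro x hx
      have hx0 : 0 < x := lt_of_le_of_lt (le_max_left _ _) hx.1
      have hxb : 0 < x + β.2 := by
        have := lt_of_le_of_lt (le_max_right 0 (-β.2)) hx.1
        linarith
      have hdist : dist ((x, β) : ℝ × (ℝ × ℝ)) (0, 0) < ε := by
        rw [Prod.dist_eq]
        simp only [max_lt_iff]
        constructor
        · rw [Real.dist_eq]
          simpa [abs_of_pos hx0] using hx.2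
        · simpa [dist_zero_right] using hβ
      exact hball hdist ⟨hx0, hxb⟩
    have hconv : StrictConvexOn ℝ (Set.Ioo (max 0 (-β.2)) ε) (fun x => H x β) := by
      apply strictConvexOn_of_deriv2_pos (convex_Ioo _ _)
      · intro x hx
        have hxb : 0 < x + β.2 := by
          have := lt_of_le_of_lt (le_max_right 0 (-β.2)) hx.1
          linarith
        rw [hfeq β]
        exact (aux1 k s β.1 β.2 (A β) R R' (fun u => φ u β) (fun u => φu u β) hRd
          (fun u hu => hφd u hu β) hxb).continuousAt.continuousWithinAt
      · intro x hx
        rw [interior_Ioo] at hx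
        have hxb : 0 < x + β.2 := by
          have := lt_of_le_of_lt (le_max_right 0 (-β.2)) hx.1
          linarith
        show 0 < deriv (deriv fun x => H x β) x
        rw [hd2 x β hxb]
        exact lt_trans hk (hpos x hx)
    exact ⟨hconv, fun x₁ h1 x₂ h2 x₃ h3 z1 z2 z3 =>
      three_zeros hconv h1 h2 h3 z1 z2 z3⟩
end
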